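/- Fix m ≥ 2. Let F(t) ∈ Q(v)[[t]], F(0) = 1, satisfy F(t) = Π_{i=1}^{m}(1 − v^{2i−m−1} t Π_{j=1}^{m−2} F(v^{2i−2j−2}t))^{−1}. Define T_i = 1 − v^{2i−m} t Π_{j=1}^{m−2} F(v^{2i−2j−1} t) for 0 ≤ i ≤ m. Then F(vt) = (T_1 ⋯ T_m)^{−1}, F(v^{−1}t) = (T_0 ⋯ T_{m−1})^{−1}, and consequently ΔF(t) = F(vt)·(T_0 − T_m)/((v − v^{−1})·T_0), where (ΔF)(t) = (F(vt) − F(v^{−1}t))/(v − v^{−1}). -/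

import Mathlib

open PowerSeries Finset

noncomputable section

/-- The field `ℚ(v)` of rational functions. -/
abbrev K : Type := RatFunc ℚ

/-- The variable `v`. -/
def v : K := RatFunc.X

/-- `scale a B` is the series `B(v^a t)`: the `t^d`-coefficient is multiplied by `v^(a*d)`. -/
def scale (a : ℤ) (B : PowerSeries K) : PowerSeries K :=
  PowerSeries.mk fun d => v ^ (a * d) * PowerSeries.coeff d B

/-- `(ΔB)(t) = (B(vt) - B(v⁻¹t))/(v - v⁻¹)`. -/
def delta (B : PowerSeries K) : PowerSeries K :=
  PowerSeries.C ((v - v⁻¹)⁻¹) * (scale 1 B - scale (-1) B)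

/-- `(∇^(k)B)(t) = (v·B(v^k t) - v⁻¹·B(v^{-k} t))/(v - v⁻¹)`. -/
def nabla (k : ℤ) (B : PowerSeries K) : PowerSeries K :=
  PowerSeries.C ((v - v⁻¹)⁻¹) *
    (PowerSeries.C v * scale k B - PowerSeries.C v⁻¹ * scale (-k) B)

/-- The right-hand side of the algebraic functional equation. -/
def rhsF (m : ℕ) (F : PowerSeries K) : PowerSeries K :=
  ∏ i ∈ Finset.Icc 1 m,
    (1 - PowerSeries.C (v ^ (2 * (i : ℤ) - m - 1)) * PowerSeries.X *
        ∏ j ∈ Finset.Icc 1 (m - 2), scale (2 * (i : ℤ) - 2 * (j : ℤ) - 2) F)⁻¹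

/-- The factor `T_i = 1 - v^(2i-m)·t·Π_{j=1}^{m-2} F(v^(2i-2j-1) t)`. -/
def Tfac (m : ℕ) (F : PowerSeries K) (i : ℕ) : PowerSeries K :=
  1 - PowerSeries.C (v ^ (2 * (i : ℤ) - m)) * PowerSeries.X *
      ∏ j ∈ Finset.Icc 1 (m - 2), scale (2 * (i : ℤ) - 2 * (j : ℤ) - 1) F

/-!
Substituting `t ↦ v^{±1} t` in the functional equation shifts every exponent of its `i`-th
factor by `±1`, turning that factor into `T_i`, resp. `T_(i-1)`. Hence `F(vt)` and `F(v⁻¹t)` are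
the inverses of `T_1 ⋯ T_m` and `T_0 ⋯ T_(m-1)`; these share `T_1 ⋯ T_(m-1)`, so their difference
is `F(vt)·(T_0 - T_m)/T_0`.
-/

open scoped PowerSeries

namespace PowerSeries

theorem rescale_C {R : Type*} [CommSemiring R] (a c : R) : rescale a (C c) = C c := by
  ext n
  rcases eq_or_ne n 0 with rfl | hn <;> simp [coeff_C, *]

variable {k : Type*} [Field k]

theorem prod_inv {ι : Type*} (s : Finset ι) (f : ι → k⟦X⟧) :
    ∏ i ∈ s, (f i)⁻¹ = (∏ i ∈ s, f i)⁻¹ := by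
  classical
  induction s using Finset.induction_on with
  | empty => simp
  | insert a s ha ih => rw [prod_insert ha, prod_insert ha, ih, PowerSeries.mul_inv_rev, mul_comm]

theorem inv_mul_sub_inv_mul (P S T : k⟦X⟧) (hS : constantCoeff S ≠ 0)
    (hT : constantCoeff T ≠ 0) :
    (P * T)⁻¹ - (S * P)⁻¹ = (P * T)⁻¹ * (S - T) * S⁻¹ := by
  rw [PowerSeries.mul_inv_rev, PowerSeries.mul_inv_rev]
  linear_combination -(T⁻¹ * P⁻¹) * PowerSeries.mul_inv_cancel S hS +
    P⁻¹ * S⁻¹ * PowerSeries.mul_inv_cancel T hT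

end PowerSeries

lemma v_ne_zero : v ≠ 0 := RatFunc.X_ne_zero

lemma scale_eq_rescale (a : ℤ) (B : K⟦X⟧) : scale a B = rescale (v ^ a) B := by
  ext d
  rw [coeff_rescale, scale, coeff_mk, ← zpow_natCast, ← zpow_mul]

lemma scale_scale (a b : ℤ) (B : K⟦X⟧) : scale a (scale b B) = scale (a + b) B := by
  ext d
  simp only [scale, coeff_mk, ← mul_assoc, ← zpow_add₀ v_ne_zero, add_mul]

lemma constantCoeff_scale (a : ℤ) (B : K⟦X⟧) : constantCoeff (scale a B) = constantCoeff B := by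
  simp [← coeff_zero_eq_constantCoeff, scale]

lemma scale_inv (a : ℤ) (B : K⟦X⟧) : scale a B⁻¹ = (scale a B)⁻¹ := by
  by_cases hB : constantCoeff B = 0
  · rw [PowerSeries.inv_eq_zero.mpr hB,
      PowerSeries.inv_eq_zero.mpr (by rwa [constantCoeff_scale]), scale_eq_rescale, map_zero]
  · rw [eq_inv_iff_mul_eq_one (by rwa [constantCoeff_scale]), scale_eq_rescale,
      scale_eq_rescale, ← map_mul, PowerSeries.inv_mul_cancel _ hB, map_one]

lemma delta_eq_of_scale_eq_inv {B P S T : K⟦X⟧} (hS : constantCoeff S ≠ 0)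
    (hT : constantCoeff T ≠ 0) (h₁ : scale 1 B = (P * T)⁻¹) (h₂ : scale (-1) B = (S * P)⁻¹) :
    delta B = C (v - v⁻¹)⁻¹ * scale 1 B * (S - T) * S⁻¹ := by
  rw [delta, h₁, h₂, inv_mul_sub_inv_mul P S T hS hT]
  ring

/-- `tFactor m F e = 1 - v^(e-m)·t·Π_{j=1}^{m-2} F(v^(e-2j-1) t)`: `T_i` is the case `e = 2i`,
and the `i`-th factor of the functional equation `rhsF` is the case `e = 2i - 1`. -/
def tFactor (m : ℕ) (F : K⟦X⟧) (e : ℤ) : K⟦X⟧ :=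
  1 - C (v ^ (e - m)) * X * ∏ j ∈ Icc 1 (m - 2), scale (e - 2 * j - 1) F

section tFactor

variable (m : ℕ) (F : K⟦X⟧)

lemma constantCoeff_tFactor (e : ℤ) : constantCoeff (tFactor m F e) = 1 := by
  simp [tFactor]

lemma scale_tFactor (a e : ℤ) : scale a (tFactor m F e) = tFactor m F (a + e) := by
  rw [tFactor, tFactor, scale_eq_rescale, map_sub, map_one, map_mul, map_mul, map_prod,
    rescale_X, rescale_C]
  simp only [← scale_eq_rescale, scale_scale]
  rw [← mul_assoc, ← map_mul, ← zpow_add₀ v_ne_zero]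
  congr! 4 with j
  · congr 1; ring
  · ring

lemma Tfac_eq_tFactor (i : ℕ) : Tfac m F i = tFactor m F (2 * i) := rfl

lemma rhsF_eq_prod_inv_tFactor : rhsF m F = ∏ i ∈ Icc 1 m, (tFactor m F (2 * i - 1))⁻¹ := by
  unfold rhsF tFactor
  congr! 5 with i - j
  · congr 2; ring
  · congr 1; ring

lemma scale_rhsF (a : ℤ) :
    scale a (rhsF m F) = (∏ i ∈ Icc 1 m, tFactor m F (a + (2 * i - 1)))⁻¹ := by
  rw [rhsF_eq_prod_inv_tFactor, scale_eq_rescale, map_prod]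
  simp only [← scale_eq_rescale, scale_inv, scale_tFactor, prod_inv]

lemma scale_one_rhsF : scale 1 (rhsF m F) = (∏ i ∈ Icc 1 m, Tfac m F i)⁻¹ := by
  rw [scale_rhsF]
  congr! 2 with i
  rw [Tfac_eq_tFactor]
  congr 1; ring

lemma scale_neg_one_rhsF (hm : 1 ≤ m) :
    scale (-1) (rhsF m F) = (∏ i ∈ Icc 0 (m - 1), Tfac m F i)⁻¹ := by
  have hIcc : Icc 1 m = (Icc 0 (m - 1)).map (addRightEmbedding 1) := by
    rw [map_add_right_Icc, Nat.sub_add_cancel hm]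
  rw [scale_rhsF, hIcc, prod_map]
  congr! 2 with i
  rw [Tfac_eq_tFactor, addRightEmbedding_apply]
  congr 1; push_cast; ring

end tFactor

theorem Tfac_identities_general (m : ℕ) (hm : 2 ≤ m) (F : PowerSeries K)
    (hF : F = rhsF m F) :
    scale 1 F = (∏ i ∈ Finset.Icc 1 m, Tfac m F i)⁻¹ ∧
    scale (-1) F = (∏ i ∈ Finset.Icc 0 (m - 1), Tfac m F i)⁻¹ ∧
    delta F = PowerSeries.C ((v - v⁻¹)⁻¹) * scale 1 F *
        (Tfac m F 0 - Tfac m F m) * (Tfac m F 0)⁻¹ := by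
  have hF₁ : scale 1 F = (∏ i ∈ Icc 1 m, Tfac m F i)⁻¹ :=
    (congrArg (scale 1) hF).trans (scale_one_rhsF m F)
  have hF₂ : scale (-1) F = (∏ i ∈ Icc 0 (m - 1), Tfac m F i)⁻¹ :=
    (congrArg (scale (-1)) hF).trans (scale_neg_one_rhsF m F (by omega))
  set P := ∏ i ∈ Icc 1 (m - 1), Tfac m F i
  have hP₁ : ∏ i ∈ Icc 1 m, Tfac m F i = P * Tfac m F m := by
    have h := prod_Icc_succ_top (show 1 ≤ m - 1 + 1 by omega) (Tfac m F)
    rwa [Nat.sub_add_cancel (by omega)] at h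
  have hP₂ : ∏ i ∈ Icc 0 (m - 1), Tfac m F i = Tfac m F 0 * P := by
    rw [← mul_prod_Ioc_eq_prod_Icc (Nat.zero_le _), ← Icc_add_one_left_eq_Ioc, zero_add]
  have hT (i : ℕ) : constantCoeff (Tfac m F i) ≠ 0 := by
    simp [Tfac_eq_tFactor, constantCoeff_tFactor]
  exact ⟨hF₁, hF₂, delta_eq_of_scale_eq_inv (hT 0) (hT m) (hP₁ ▸ hF₁) (hP₂ ▸ hF₂)⟩

/-- `F(vt) = (T_1⋯T_m)⁻¹`, `F(v⁻¹t) = (T_0⋯T_(m-1))⁻¹`, and consequently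
`ΔF(t) = F(vt)·(T_0 - T_m)/((v - v⁻¹)·T_0)`. -/
theorem Tfac_identities (m : ℕ) (hm : 2 ≤ m) (F : PowerSeries K)
    (h0 : PowerSeries.coeff 0 F = 1) (hF : F = rhsF m F) :
    scale 1 F = (∏ i ∈ Finset.Icc 1 m, Tfac m F i)⁻¹ ∧
    scale (-1) F = (∏ i ∈ Finset.Icc 0 (m - 1), Tfac m F i)⁻¹ ∧
    delta F = PowerSeries.C ((v - v⁻¹)⁻¹) * scale 1 F *
        (Tfac m F 0 - Tfac m F m) * (Tfac m F 0)⁻¹ :=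
  Tfac_identities_general m hm F hF
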